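/- Let 0 < Ω₀ ≤ 4/√π. Then the function ρ^TF(x) = 1/π − (Ω₀²/16)(1 − 2|x|²) is nonnegative on B₁ with ∫_{B₁}ρ^TF = 1, the Thomas–Fermi functional satisfies E^TF[ρ] ≥ E^TF[ρ^TF] for every ρ ∈ L²(B₁) with ρ ≥ 0 a.e. and ∫_{B₁}ρ = 1, with equality if and only if ρ = ρ^TF a.e., and the minimum value is E^TF = 1/π − Ω₀²/8 − πΩ₀⁴/768. -/

import Mathlib

open MeasureTheory Real Filter

noncomputable section

/-- Points of the plane. -/
abbrev Pt : Type := EuclideanSpace ℝ (Fin 2)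

/-- The open unit disc. -/
def B1 : Set Pt := Metric.ball 0 1

/-- First partial derivative of a complex-valued function. -/
def pd1 (Ψ : Pt → ℂ) (x : Pt) : ℂ := fderiv ℝ Ψ x (EuclideanSpace.single 0 1)

/-- Second partial derivative of a complex-valued function. -/
def pd2 (Ψ : Pt → ℂ) (x : Pt) : ℂ := fderiv ℝ Ψ x (EuclideanSpace.single 1 1)

/-- Angular momentum operator `L = -i (x₁ ∂₂ - x₂ ∂₁)`. -/
def angMom (Ψ : Pt → ℂ) (x : Pt) : ℂ :=
  -Complex.I * ((x 0 : ℂ) * pd2 Ψ x - (x 1 : ℂ) * pd1 Ψ x)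

/-- The Gross-Pitaevskii energy density `|∇Ψ|² - Ω conj(Ψ) LΨ + |Ψ|⁴/ε²`. -/
def gpDensity (ε Ω : ℝ) (Ψ : Pt → ℂ) (x : Pt) : ℝ :=
  ‖pd1 Ψ x‖ ^ 2 + ‖pd2 Ψ x‖ ^ 2
    - Ω * (starRingEnd ℂ (Ψ x) * angMom Ψ x).re
    + ‖Ψ x‖ ^ 4 / ε ^ 2

/-- The Gross-Pitaevskii functional on the unit disc. -/
def gpEnergy (ε Ω : ℝ) (Ψ : Pt → ℂ) : ℝ := ∫ x in B1, gpDensity ε Ω Ψ x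

/-- Admissible (H¹, normalized) wave functions. -/
def gpAdm (Ψ : Pt → ℂ) : Prop :=
  DifferentiableOn ℝ Ψ B1 ∧
  IntegrableOn (fun x => ‖Ψ x‖ ^ 2) B1 ∧
  IntegrableOn (fun x => ‖pd1 Ψ x‖ ^ 2 + ‖pd2 Ψ x‖ ^ 2) B1 ∧
  IntegrableOn (fun x => ‖Ψ x‖ ^ 4) B1 ∧
  IntegrableOn (fun x => (starRingEnd ℂ (Ψ x) * angMom Ψ x).re) B1 ∧
  (∫ x in B1, ‖Ψ x‖ ^ 2) = 1

/-- The GP ground-state energy: infimum of the functional over normalized functions. -/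
def gpGround (ε Ω : ℝ) : ℝ := sInf {E | ∃ Ψ : Pt → ℂ, gpAdm Ψ ∧ E = gpEnergy ε Ω Ψ}

/-- A GP minimizer: a normalized admissible function attaining the infimum. -/
def IsGPMinimizer (ε Ω : ℝ) (Ψ : Pt → ℂ) : Prop :=
  gpAdm Ψ ∧ gpEnergy ε Ω Ψ = gpGround ε Ω

/-- The Thomas-Fermi functional. -/
def tfEnergy (Ω₀ : ℝ) (ρ : Pt → ℝ) : ℝ :=
  ∫ x in B1, ((ρ x) ^ 2 - Ω₀ ^ 2 * ‖x‖ ^ 2 * ρ x / 4)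

/-- Admissible TF densities: nonnegative, in L²(B₁), of total mass one. -/
def tfAdm (ρ : Pt → ℝ) : Prop :=
  IntegrableOn ρ B1 ∧ IntegrableOn (fun x => (ρ x) ^ 2) B1 ∧
  (∀ᵐ x ∂(volume.restrict B1), 0 ≤ ρ x) ∧ (∫ x in B1, ρ x) = 1

/-- The TF ground-state energy. -/
def tfGround (Ω₀ : ℝ) : ℝ := sInf {E | ∃ ρ : Pt → ℝ, tfAdm ρ ∧ E = tfEnergy Ω₀ ρ}

/-- Radius of the TF "hole". -/
def R0 (Ω₀ : ℝ) : ℝ := Real.sqrt (1 - 4 / (Real.sqrt π * Ω₀))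

/-- The TF minimizer. -/
def rhoTF (Ω₀ : ℝ) (x : Pt) : ℝ :=
  if Ω₀ ≤ 4 / Real.sqrt π then 1 / π - Ω₀ ^ 2 / 16 * (1 - 2 * ‖x‖ ^ 2)
  else max 0 (Ω₀ ^ 2 / 8 * (‖x‖ ^ 2 - 1) + Ω₀ / (2 * Real.sqrt π))

/-!
Writing `c = 1/π - Ω₀²/16`, the candidate is `ρTF(x) = c + Ω₀²|x|²/8`, so completing the square gives
the pointwise identity `ρ² - Ω₀²|x|²ρ/4 = (ρ - ρTF)² + 2cρ - ρTF²`. Integrated against a density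
of mass one this reads `E^TF[ρ] = E^TF[ρTF] + ‖ρ - ρTF‖²_{L²(B₁)}`, which gives minimality and the
equality case at once. The constraint `Ω₀ ≤ 4/√π` is exactly `c ≥ 0`, i.e. `ρTF ≥ 0`. The
remaining values are integrals of `1, |x|², |x|⁴` over the disc, computed in polar coordinates.
-/

open Metric Set Module

section Radial

variable {E : Type*} [NormedAddCommGroup E] [InnerProductSpace ℝ E] [FiniteDimensional ℝ E]
  [MeasurableSpace E] [BorelSpace E] [Nontrivial E] (μ : Measure E) [μ.IsAddHaarMeasure]

theorem setIntegral_ball_zero_one_norm_pow (k : ℕ) :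
    ∫ x in ball (0 : E) 1, ‖x‖ ^ k ∂μ =
      finrank ℝ E / (finrank ℝ E + k) * μ.real (ball 0 1) := by
  have hn : 0 < finrank ℝ E := finrank_pos
  have h := integral_fun_norm_addHaar μ ((Iio (1 : ℝ)).indicator (· ^ k))
  have hL : ∫ x, (Iio (1 : ℝ)).indicator (· ^ k) ‖x‖ ∂μ = ∫ x in ball (0 : E) 1, ‖x‖ ^ k ∂μ := by
    rw [← integral_indicator measurableSet_ball]
    congr 1 with x
    simp [indicator]
  have hR : ∫ y in Ioi (0 : ℝ), y ^ (finrank ℝ E - 1) • (Iio (1 : ℝ)).indicator (· ^ k) y =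
      1 / (finrank ℝ E + k) := by
    have : ∀ y : ℝ, y ^ (finrank ℝ E - 1) • (Iio (1 : ℝ)).indicator (· ^ k) y =
        (Iio (1 : ℝ)).indicator (· ^ (finrank ℝ E - 1 + k)) y := by
      intro y
      by_cases hy : y < 1 <;> simp [indicator, hy, pow_add]
    simp only [this]
    rw [setIntegral_indicator measurableSet_Iio, Ioi_inter_Iio, ← integral_Ioc_eq_integral_Ioo,
      ← intervalIntegral.integral_of_le zero_le_one, integral_pow, Nat.cast_add, Nat.cast_sub hn]
    ring_nf
  rw [← hL, h, hR, nsmul_eq_mul, smul_eq_mul]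
  field_simp

end Radial

section Integrability

variable {X : Type*} [MetricSpace X] [ProperSpace X] [MeasurableSpace X]
  [OpensMeasurableSpace X] {μ : Measure X} [IsFiniteMeasureOnCompacts μ] {s : Set X}

theorem Continuous.integrableOn_of_isBounded {g : X → ℝ} (hg : Continuous g)
    (hs : Bornology.IsBounded s) : IntegrableOn g s μ :=
  (hg.continuousOn.integrableOn_compact hs.isCompact_closure).mono_set subset_closure

theorem MeasureTheory.IntegrableOn.sub_continuous_sq {ρ g : X → ℝ} (hs : Bornology.IsBounded s)
    (hsm : MeasurableSet s) (hρ : IntegrableOn ρ s μ) (hρ2 : IntegrableOn (fun x => ρ x ^ 2) s μ)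
    (hg : Continuous g) : IntegrableOn (fun x => (ρ x - g x) ^ 2) s μ := by
  have hgρ : IntegrableOn (fun x => g x * ρ x) s μ :=
    hρ.continuousOn_mul_of_subset hg.continuousOn hs.isCompact_closure hsm subset_closure
  have hg2 : IntegrableOn (fun x => g x ^ 2) s μ := (hg.pow 2).integrableOn_of_isBounded hs
  refine ((hρ2.sub (hgρ.const_mul 2)).add hg2).congr_fun (fun x _ => ?_) hsm
  simp only [Pi.add_apply, Pi.sub_apply]
  ring

end Integrability

theorem measurableSet_B1 : MeasurableSet B1 := measurableSet_ball

theorem isBounded_B1 : Bornology.IsBounded B1 := isBounded_ball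

theorem volume_real_B1 : volume.real B1 = π := by
  simp [B1, measureReal_def, pi_nonneg]

theorem setIntegral_B1_norm_pow (k : ℕ) : ∫ x in B1, ‖x‖ ^ k = 2 * π / (k + 2) := by
  rw [B1, setIntegral_ball_zero_one_norm_pow, ← B1, volume_real_B1, finrank_euclideanSpace_fin]
  push_cast
  ring

theorem setIntegral_B1_quartic (a b c : ℝ) :
    ∫ x in B1, (a + b * ‖x‖ ^ 2 + c * ‖x‖ ^ 4) = π * (a + b / 2 + c / 3) := by
  have h0 : IntegrableOn (fun _ : Pt => a) B1 :=
    continuous_const.integrableOn_of_isBounded isBounded_B1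
  have h2 : IntegrableOn (fun x : Pt => b * ‖x‖ ^ 2) B1 :=
    Continuous.integrableOn_of_isBounded (by fun_prop) isBounded_B1
  have h4 : IntegrableOn (fun x : Pt => c * ‖x‖ ^ 4) B1 :=
    Continuous.integrableOn_of_isBounded (by fun_prop) isBounded_B1
  have h02 : IntegrableOn (fun x : Pt => a + b * ‖x‖ ^ 2) B1 := h0.add h2
  rw [integral_add h02 h4, integral_add h0 h2, setIntegral_const, integral_const_mul,
    integral_const_mul, setIntegral_B1_norm_pow, setIntegral_B1_norm_pow, volume_real_B1,
    smul_eq_mul]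
  push_cast
  ring

-- The branch of `rhoTF` for `Ω₀ ≤ 4 / √π`, where the density has no hole.
def rhoTFNoHole (Ω₀ : ℝ) (x : Pt) : ℝ := 1 / π - Ω₀ ^ 2 / 16 * (1 - 2 * ‖x‖ ^ 2)

theorem continuous_rhoTFNoHole (Ω₀ : ℝ) : Continuous (rhoTFNoHole Ω₀) := by
  unfold rhoTFNoHole
  fun_prop

theorem integrableOn_rhoTFNoHole (Ω₀ : ℝ) : IntegrableOn (rhoTFNoHole Ω₀) B1 :=
  (continuous_rhoTFNoHole Ω₀).integrableOn_of_isBounded isBounded_B1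

theorem integrableOn_rhoTFNoHole_sq (Ω₀ : ℝ) :
    IntegrableOn (fun x => rhoTFNoHole Ω₀ x ^ 2) B1 :=
  ((continuous_rhoTFNoHole Ω₀).pow 2).integrableOn_of_isBounded isBounded_B1

theorem rhoTFNoHole_nonneg {Ω₀ : ℝ} (h0 : 0 ≤ Ω₀) (h : Ω₀ ≤ 4 / √π) (x : Pt) :
    0 ≤ rhoTFNoHole Ω₀ x := by
  have hsq : Ω₀ ^ 2 ≤ 16 / π := by
    calc Ω₀ ^ 2 ≤ (4 / √π) ^ 2 := pow_le_pow_left₀ h0 h 2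
      _ = 16 / π := by rw [div_pow, sq_sqrt pi_nonneg]; norm_num
  have hc : 0 ≤ 1 / π - Ω₀ ^ 2 / 16 := by
    rw [le_div_iff₀ pi_pos] at hsq
    rw [sub_nonneg, div_le_div_iff₀ (by norm_num) pi_pos]
    linarith
  unfold rhoTFNoHole
  nlinarith [sq_nonneg Ω₀, sq_nonneg ‖x‖]

theorem integral_rhoTFNoHole (Ω₀ : ℝ) : ∫ x in B1, rhoTFNoHole Ω₀ x = 1 := by
  have h : ∀ x, rhoTFNoHole Ω₀ x = (1 / π - Ω₀ ^ 2 / 16) + Ω₀ ^ 2 / 8 * ‖x‖ ^ 2 + 0 * ‖x‖ ^ 4 :=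
    fun x => by unfold rhoTFNoHole; ring
  simp only [h, setIntegral_B1_quartic]
  field_simp
  ring

theorem integral_rhoTFNoHole_sq (Ω₀ : ℝ) :
    ∫ x in B1, rhoTFNoHole Ω₀ x ^ 2 = π * ((1 / π - Ω₀ ^ 2 / 16) ^ 2 +
      (1 / π - Ω₀ ^ 2 / 16) * Ω₀ ^ 2 / 8 + Ω₀ ^ 4 / 192) := by
  have h : ∀ x, rhoTFNoHole Ω₀ x ^ 2 = (1 / π - Ω₀ ^ 2 / 16) ^ 2 +
      (1 / π - Ω₀ ^ 2 / 16) * Ω₀ ^ 2 / 4 * ‖x‖ ^ 2 + Ω₀ ^ 4 / 64 * ‖x‖ ^ 4 :=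
    fun x => by unfold rhoTFNoHole; ring
  simp only [h, setIntegral_B1_quartic]
  ring

theorem tfEnergy_eq_integral_sub_sq (Ω₀ : ℝ) {ρ : Pt → ℝ} (hρ : IntegrableOn ρ B1)
    (hρ2 : IntegrableOn (fun x => ρ x ^ 2) B1) :
    tfEnergy Ω₀ ρ = (∫ x in B1, (ρ x - rhoTFNoHole Ω₀ x) ^ 2) +
      2 * (1 / π - Ω₀ ^ 2 / 16) * (∫ x in B1, ρ x) - ∫ x in B1, rhoTFNoHole Ω₀ x ^ 2 := by
  have h : ∀ x, ρ x ^ 2 - Ω₀ ^ 2 * ‖x‖ ^ 2 * ρ x / 4 = (ρ x - rhoTFNoHole Ω₀ x) ^ 2 +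
      2 * (1 / π - Ω₀ ^ 2 / 16) * ρ x - rhoTFNoHole Ω₀ x ^ 2 :=
    fun x => by unfold rhoTFNoHole; ring
  have hsq := hρ.sub_continuous_sq isBounded_B1 measurableSet_B1 hρ2 (continuous_rhoTFNoHole Ω₀)
  have hlin : IntegrableOn (fun x => (ρ x - rhoTFNoHole Ω₀ x) ^ 2 +
      2 * (1 / π - Ω₀ ^ 2 / 16) * ρ x) B1 := hsq.add (hρ.const_mul _)
  rw [tfEnergy]
  simp only [h]
  rw [integral_sub hlin (integrableOn_rhoTFNoHole_sq Ω₀),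
    integral_add hsq (hρ.const_mul _), integral_const_mul]

theorem tfEnergy_rhoTFNoHole (Ω₀ : ℝ) :
    tfEnergy Ω₀ (rhoTFNoHole Ω₀) = 1 / π - Ω₀ ^ 2 / 8 - π * Ω₀ ^ 4 / 768 := by
  rw [tfEnergy_eq_integral_sub_sq Ω₀ (integrableOn_rhoTFNoHole Ω₀)
    (integrableOn_rhoTFNoHole_sq Ω₀), integral_rhoTFNoHole, integral_rhoTFNoHole_sq]
  simp only [sub_self, zero_pow two_ne_zero, integral_zero]
  field_simp
  ring

theorem tfEnergy_eq_tfEnergy_rhoTFNoHole_add (Ω₀ : ℝ) {ρ : Pt → ℝ} (hρ : IntegrableOn ρ B1)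
    (hρ2 : IntegrableOn (fun x => ρ x ^ 2) B1) (hmass : ∫ x in B1, ρ x = 1) :
    tfEnergy Ω₀ ρ = tfEnergy Ω₀ (rhoTFNoHole Ω₀) + ∫ x in B1, (ρ x - rhoTFNoHole Ω₀ x) ^ 2 := by
  rw [tfEnergy_eq_integral_sub_sq Ω₀ hρ hρ2,
    tfEnergy_eq_integral_sub_sq Ω₀ (integrableOn_rhoTFNoHole Ω₀)
      (integrableOn_rhoTFNoHole_sq Ω₀),
    integral_rhoTFNoHole, hmass]
  simp only [sub_self, zero_pow two_ne_zero, integral_zero]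
  ring

theorem tfEnergy_rhoTFNoHole_le (Ω₀ : ℝ) {ρ : Pt → ℝ} (hρ : IntegrableOn ρ B1)
    (hρ2 : IntegrableOn (fun x => ρ x ^ 2) B1) (hmass : ∫ x in B1, ρ x = 1) :
    tfEnergy Ω₀ (rhoTFNoHole Ω₀) ≤ tfEnergy Ω₀ ρ := by
  rw [tfEnergy_eq_tfEnergy_rhoTFNoHole_add Ω₀ hρ hρ2 hmass]
  exact le_add_of_nonneg_right (setIntegral_nonneg measurableSet_B1 fun x _ => sq_nonneg _)

theorem tfEnergy_eq_tfEnergy_rhoTFNoHole_iff (Ω₀ : ℝ) {ρ : Pt → ℝ} (hρ : IntegrableOn ρ B1)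
    (hρ2 : IntegrableOn (fun x => ρ x ^ 2) B1) (hmass : ∫ x in B1, ρ x = 1) :
    tfEnergy Ω₀ ρ = tfEnergy Ω₀ (rhoTFNoHole Ω₀) ↔ ρ =ᵐ[volume.restrict B1] rhoTFNoHole Ω₀ := by
  rw [tfEnergy_eq_tfEnergy_rhoTFNoHole_add Ω₀ hρ hρ2 hmass, add_eq_left,
    integral_eq_zero_iff_of_nonneg (fun x => sq_nonneg _)
      (hρ.sub_continuous_sq isBounded_B1 measurableSet_B1 hρ2 (continuous_rhoTFNoHole Ω₀))]
  simp only [EventuallyEq, Pi.zero_apply, sq_eq_zero_iff, sub_eq_zero]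

theorem stmt6 (Ω₀ : ℝ) (h1 : 0 < Ω₀) (h2 : Ω₀ ≤ 4 / Real.sqrt π) :
    (∀ x ∈ B1, 0 ≤ 1 / π - Ω₀ ^ 2 / 16 * (1 - 2 * ‖x‖ ^ 2)) ∧
    (∫ x in B1, (1 / π - Ω₀ ^ 2 / 16 * (1 - 2 * ‖x‖ ^ 2))) = 1 ∧
    (∀ ρ : Pt → ℝ, tfAdm ρ →
      tfEnergy Ω₀ (fun x => 1 / π - Ω₀ ^ 2 / 16 * (1 - 2 * ‖x‖ ^ 2)) ≤ tfEnergy Ω₀ ρ ∧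
      (tfEnergy Ω₀ ρ = tfEnergy Ω₀ (fun x => 1 / π - Ω₀ ^ 2 / 16 * (1 - 2 * ‖x‖ ^ 2)) ↔
        ρ =ᵐ[volume.restrict B1] fun x => 1 / π - Ω₀ ^ 2 / 16 * (1 - 2 * ‖x‖ ^ 2))) ∧
    tfEnergy Ω₀ (fun x => 1 / π - Ω₀ ^ 2 / 16 * (1 - 2 * ‖x‖ ^ 2)) =
      1 / π - Ω₀ ^ 2 / 8 - π * Ω₀ ^ 4 / 768 :=
  ⟨fun x _ => rhoTFNoHole_nonneg h1.le h2 x, integral_rhoTFNoHole Ω₀,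
    fun _ ⟨hρ, hρ2, _, hmass⟩ => ⟨tfEnergy_rhoTFNoHole_le Ω₀ hρ hρ2 hmass,
      tfEnergy_eq_tfEnergy_rhoTFNoHole_iff Ω₀ hρ hρ2 hmass⟩,
    tfEnergy_rhoTFNoHole Ω₀⟩
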